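/- arXiv:2407.17769 — 3 statements merged into one kernel-verified Lean document; each statement's English description precedes it below -/
import Mathlib

section
/- For any α < -1 and any S ∈ (0, ∞), there exists a constant C > 0 such that for all s ∈ (0, S), ∫₀ˢ τ⁻¹ (log(e + τ⁻¹))^α dτ ≤ C (log(e + s⁻¹))^{α+1}. -/
open MeasureTheory ENNReal Set

noncomputable def Phi (s : ℝ) : ℝ := Real.log (Real.exp 1 + s)

/-!
Substitute `u = Φ(τ⁻¹)`. Then `|du| = dτ / (τ (e τ + 1))`, so `dτ / τ ≤ (e S + 1) |du|` for
`τ ≤ S`, and the substitution maps `(0, s)` into `(Φ(s⁻¹), ∞)`. Hence the integral is at most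
`(e S + 1) ∫_{Φ(s⁻¹)}^∞ u^α du = (e S + 1) Φ(s⁻¹)^(α+1) / (-(α + 1))`, finite since `α < -1`.
-/

open Real

lemma Phi_pos {x : ℝ} (hx : 0 ≤ x) : 0 < Phi x :=
  log_pos (by linarith [add_one_lt_exp one_ne_zero])

lemma hasDerivAt_Phi_inv {τ : ℝ} (hτ : 0 < τ) :
    HasDerivAt (fun t ↦ Phi t⁻¹) (-(τ * (exp 1 * τ + 1))⁻¹) τ := by
  have hpos : 0 < exp 1 + τ⁻¹ := by positivity
  refine (((hasDerivAt_inv hτ.ne').const_add (exp 1)).log hpos.ne').congr_deriv ?_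
  field_simp

lemma strictAntiOn_Phi_inv : StrictAntiOn (fun t ↦ Phi t⁻¹) (Ioi 0) := by
  intro x (hx : 0 < x) y (hy : 0 < y) hxy
  exact log_lt_log (by positivity) (by gcongr)

lemma inv_le_mul_inv_mul_add_one {c S τ : ℝ} (hc : 0 ≤ c) (hτ : 0 < τ) (hτS : τ ≤ S) :
    τ⁻¹ ≤ (c * S + 1) * (τ * (c * τ + 1))⁻¹ := by
  have h : 0 < c * τ + 1 := by positivity
  rw [mul_inv, ← mul_assoc, le_mul_inv_iff₀ h, mul_comm]
  gcongr

lemma lintegral_Ioi_rpow_of_lt {a c : ℝ} (ha : a < -1) (hc : 0 < c) :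
    ∫⁻ x in Ioi c, ENNReal.ofReal (x ^ a) = ENNReal.ofReal (-c ^ (a + 1) / (a + 1)) := by
  rw [← integral_Ioi_rpow_of_lt ha hc, ofReal_integral_eq_lintegral_ofReal
    (integrableOn_Ioi_rpow_of_lt ha hc)]
  filter_upwards [ae_restrict_mem measurableSet_Ioi] with x hx
  exact rpow_nonneg (hc.trans hx).le a

lemma lintegral_Ioo_inv_mul_Phi_inv_rpow_le {α S s : ℝ} (hα : α < -1) (hs : 0 < s)
    (hsS : s ≤ S) :
    ∫⁻ τ in Ioo 0 s, ENNReal.ofReal (τ⁻¹ * Phi τ⁻¹ ^ α) ≤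
      ENNReal.ofReal ((exp 1 * S + 1) / -(α + 1) * Phi s⁻¹ ^ (α + 1)) := by
  set G : ℝ → ℝ := fun t ↦ Phi t⁻¹
  set G' : ℝ → ℝ := fun t ↦ -(t * (exp 1 * t + 1))⁻¹
  have hGpos : ∀ t, 0 < t → 0 < G t := fun t ht ↦ Phi_pos (by positivity)
  have hG'abs : ∀ t, 0 < t → |G' t| = (t * (exp 1 * t + 1))⁻¹ := fun t ht ↦ by
    simp only [G', abs_neg]
    exact abs_of_pos (by positivity)
  have hC : 0 ≤ exp 1 * S + 1 := by nlinarith [exp_pos 1]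
  have hmaps : G '' Ioo 0 s ⊆ Ioi (G s) := by
    rintro _ ⟨t, ht, rfl⟩
    exact strictAntiOn_Phi_inv ht.1 hs ht.2
  calc ∫⁻ τ in Ioo 0 s, ENNReal.ofReal (τ⁻¹ * G τ ^ α)
      ≤ ∫⁻ τ in Ioo 0 s, ENNReal.ofReal (exp 1 * S + 1) *
          (ENNReal.ofReal |G' τ| * ENNReal.ofReal (G τ ^ α)) := by
        refine setLIntegral_mono' measurableSet_Ioo fun τ hτ ↦ ?_
        have hGα := rpow_pos_of_pos (hGpos τ hτ.1) α
        rw [← ofReal_mul (abs_nonneg _), ← ofReal_mul hC, ← mul_assoc, hG'abs τ hτ.1]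
        gcongr
        exact inv_le_mul_inv_mul_add_one (exp_pos 1).le hτ.1 (hτ.2.le.trans hsS)
    _ = ENNReal.ofReal (exp 1 * S + 1) * ∫⁻ u in G '' Ioo 0 s, ENNReal.ofReal (u ^ α) := by
        rw [lintegral_const_mul' _ _ ofReal_ne_top, lintegral_image_eq_lintegral_abs_deriv_mul
          measurableSet_Ioo (fun t ht ↦ (hasDerivAt_Phi_inv ht.1).hasDerivWithinAt)
          (strictAntiOn_Phi_inv.injOn.mono Ioo_subset_Ioi_self)]
    _ ≤ ENNReal.ofReal (exp 1 * S + 1) * ∫⁻ u in Ioi (G s), ENNReal.ofReal (u ^ α) := by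
        gcongr
    _ = ENNReal.ofReal ((exp 1 * S + 1) / -(α + 1) * G s ^ (α + 1)) := by
        rw [lintegral_Ioi_rpow_of_lt hα (hGpos s hs), ← ofReal_mul hC]
        congr 1
        field_simp

theorem stmt1 (α S : ℝ) (hα : α < -1) (hS : 0 < S) :
    ∃ C : ℝ, 0 < C ∧ ∀ s : ℝ, 0 < s → s < S →
      (∫⁻ τ in Set.Ioo (0 : ℝ) s, ENNReal.ofReal (τ⁻¹ * Phi τ⁻¹ ^ α)) ≤
        ENNReal.ofReal (C * Phi s⁻¹ ^ (α + 1)) :=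
  ⟨(exp 1 * S + 1) / -(α + 1), div_pos (by nlinarith [exp_pos 1]) (by linarith),
    fun _ hs hsS ↦ lintegral_Ioo_inv_mul_Phi_inv_rpow_le hα hs hsS.le⟩
end

section
/- Let r ∈ (1, ∞) and α ∈ [0, ∞). There exists C > 0 such that for every measurable function f on ℝ^N, sup_{s>0} { s (log(e + s⁻¹))^α f**(s)^r }^{1/r} ≤ C ‖f‖_{L^{r,∞}(log L)^α}, where f**(s) := (1/s) ∫₀ˢ f*(τ) dτ. -/
/-!
Write the weak-type quantity as `s ^ (1/r) * W s * f*(s)` with `W s = Φ(s⁻¹) ^ (α/r)`, which is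
non-increasing. If `M` bounds it, then for `0 < τ < s` we get `W s * f*(τ) ≤ M * τ ^ (-1/r)`, and
integrating over `(0, s)` gives `W s * ∫₀ˢ f* ≤ M * s ^ (1 - 1/r) / (1 - 1/r)`, that is
`s ^ (1/r) * W s * f**(s) ≤ (1 - 1/r)⁻¹ * M`.
-/

open MeasureTheory ENNReal Set

/-- The non-increasing rearrangement of `f`, with `inf ∅ = ∞`. -/
noncomputable def rearr {E : Type*} [MeasureSpace E] (f : E → ℝ) (s : ℝ) : ℝ≥0∞ :=
  sInf {l : ℝ≥0∞ | volume {x | l < (‖f x‖₊ : ℝ≥0∞)} ≤ ENNReal.ofReal s}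

/-- The maximal (averaged) rearrangement `f**(s) = (1/s)∫₀ˢ f*(τ) dτ`. -/
noncomputable def rearrStar {E : Type*} [MeasureSpace E] (f : E → ℝ) (s : ℝ) : ℝ≥0∞ :=
  (ENNReal.ofReal s)⁻¹ * ∫⁻ τ in Set.Ioo (0 : ℝ) s, rearr f τ

lemma lintegral_Ioo_ofReal_rpow {p : ℝ} (hp : -1 < p) {s : ℝ} (hs : 0 < s) :
    ∫⁻ τ in Ioo (0 : ℝ) s, ENNReal.ofReal τ ^ p = ENNReal.ofReal (s ^ (p + 1) / (p + 1)) := by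
  have hint : IntegrableOn (fun τ : ℝ => τ ^ p) (Ioo 0 s) :=
    (intervalIntegral.intervalIntegrable_rpow' hp).1.mono_set Ioo_subset_Ioc_self
  rw [setLIntegral_congr_fun measurableSet_Ioo fun τ hτ => ENNReal.ofReal_rpow_of_pos hτ.1,
    ← ofReal_integral_eq_lintegral_ofReal hint
      (ae_restrict_of_forall_mem measurableSet_Ioo fun τ hτ => Real.rpow_nonneg hτ.1.le p),
    ← integral_Ioc_eq_integral_Ioo, ← intervalIntegral.integral_of_le hs.le,
    integral_rpow (Or.inl hp), Real.zero_rpow (by linarith), sub_zero]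

section WeakTypeHardy

variable {p : ℝ} {W g : ℝ → ℝ≥0∞}

lemma mul_setLIntegral_Ioo_le_of_forall_le (hp : p < 1) (hW : AntitoneOn W (Ioi 0)) {M : ℝ≥0∞}
    (hM : ∀ τ, 0 < τ → ENNReal.ofReal τ ^ p * W τ * g τ ≤ M) {s : ℝ} (hs : 0 < s) :
    W s * ∫⁻ τ in Ioo 0 s, g τ ≤ M * ENNReal.ofReal (s ^ (1 - p) / (1 - p)) := by
  have hpointwise : ∀ τ ∈ Ioo 0 s, W s * g τ ≤ M * ENNReal.ofReal τ ^ (-p) := by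
    intro τ ⟨hτ, hτs⟩
    have hτp : ENNReal.ofReal τ ^ (-p) * ENNReal.ofReal τ ^ p = 1 := by
      rw [ENNReal.rpow_neg, ENNReal.inv_mul_cancel]
      · exact (ENNReal.rpow_pos (ENNReal.ofReal_pos.2 hτ) ENNReal.ofReal_ne_top).ne'
      · exact ENNReal.rpow_ne_top_of_nonneg' (ENNReal.ofReal_pos.2 hτ) ENNReal.ofReal_ne_top
    calc W s * g τ = ENNReal.ofReal τ ^ (-p) * (ENNReal.ofReal τ ^ p * W s * g τ) := by
          rw [← mul_assoc, ← mul_assoc, hτp, one_mul]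
      _ ≤ ENNReal.ofReal τ ^ (-p) * M := by
          gcongr
          exact (mul_le_mul_left (mul_le_mul_right (hW hτ hs hτs.le) _) _).trans (hM τ hτ)
      _ = M * ENNReal.ofReal τ ^ (-p) := mul_comm _ _
  calc W s * ∫⁻ τ in Ioo 0 s, g τ ≤ ∫⁻ τ in Ioo 0 s, W s * g τ := lintegral_const_mul_le _ _
    _ ≤ ∫⁻ τ in Ioo 0 s, M * ENNReal.ofReal τ ^ (-p) :=
        setLIntegral_mono' measurableSet_Ioo hpointwise
    _ = M * ENNReal.ofReal (s ^ (1 - p) / (1 - p)) := by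
        rw [lintegral_const_mul _ (by fun_prop), lintegral_Ioo_ofReal_rpow (by linarith) hs,
          neg_add_eq_sub]

lemma ofReal_rpow_mul_inv_mul_ofReal_rpow_div {s : ℝ} (hs : 0 < s) :
    ENNReal.ofReal s ^ p * (ENNReal.ofReal s)⁻¹ * ENNReal.ofReal (s ^ (1 - p) / (1 - p)) =
      ENNReal.ofReal (1 - p)⁻¹ := by
  have hreal : s ^ p * s⁻¹ * (s ^ (1 - p) / (1 - p)) = (1 - p)⁻¹ := by
    have hsum : s ^ p * s ^ (1 - p) = s := by
      rw [← Real.rpow_add hs, add_sub_cancel, Real.rpow_one]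
    calc s ^ p * s⁻¹ * (s ^ (1 - p) / (1 - p)) = s ^ p * s ^ (1 - p) * s⁻¹ / (1 - p) := by ring
      _ = (1 - p)⁻¹ := by rw [hsum, mul_inv_cancel₀ hs.ne', one_div]
  rw [← hreal, ENNReal.ofReal_mul (by positivity), ENNReal.ofReal_mul (by positivity),
    ENNReal.ofReal_rpow_of_pos hs, ENNReal.ofReal_inv_of_pos hs]

theorem iSup_rpow_mul_average_le (hp : p < 1) (hW : AntitoneOn W (Ioi 0)) :
    ⨆ (s : ℝ) (_ : 0 < s),
        ENNReal.ofReal s ^ p * W s * ((ENNReal.ofReal s)⁻¹ * ∫⁻ τ in Ioo 0 s, g τ) ≤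
      ENNReal.ofReal (1 - p)⁻¹ * ⨆ (s : ℝ) (_ : 0 < s), ENNReal.ofReal s ^ p * W s * g s := by
  set M := ⨆ (s : ℝ) (_ : 0 < s), ENNReal.ofReal s ^ p * W s * g s
  have hM : ∀ τ, 0 < τ → ENNReal.ofReal τ ^ p * W τ * g τ ≤ M := fun τ hτ =>
    le_iSup₂ (f := fun τ (_ : 0 < τ) => ENNReal.ofReal τ ^ p * W τ * g τ) τ hτ
  refine iSup₂_le fun s hs => ?_
  calc ENNReal.ofReal s ^ p * W s * ((ENNReal.ofReal s)⁻¹ * ∫⁻ τ in Ioo 0 s, g τ)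
      = ENNReal.ofReal s ^ p * (ENNReal.ofReal s)⁻¹ * (W s * ∫⁻ τ in Ioo 0 s, g τ) := by ring
    _ ≤ ENNReal.ofReal s ^ p * (ENNReal.ofReal s)⁻¹ *
          (M * ENNReal.ofReal (s ^ (1 - p) / (1 - p))) := by
        gcongr _ * ?_
        exact mul_setLIntegral_Ioo_le_of_forall_le hp hW hM hs
    _ = ENNReal.ofReal s ^ p * (ENNReal.ofReal s)⁻¹ *
          ENNReal.ofReal (s ^ (1 - p) / (1 - p)) * M := by ring
    _ = ENNReal.ofReal (1 - p)⁻¹ * M := by rw [ofReal_rpow_mul_inv_mul_ofReal_rpow_div hs]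

end WeakTypeHardy

lemma monotoneOn_Phi : MonotoneOn Phi (Ici 0) := fun _ ha _ _ hab =>
  Real.log_le_log (by have := ha.out; positivity) (by linarith)

lemma one_le_Phi {t : ℝ} (ht : 0 ≤ t) : 1 ≤ Phi t := by
  simpa [Phi] using monotoneOn_Phi (mem_Ici.2 le_rfl) ht ht

lemma antitoneOn_ofReal_Phi_inv_rpow {α β : ℝ} (hα : 0 ≤ α) (hβ : 0 ≤ β) :
    AntitoneOn (fun s => ENNReal.ofReal (Phi s⁻¹ ^ α) ^ β) (Ioi 0) := by
  intro a ha b hb hab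
  have hinv : b⁻¹ ≤ a⁻¹ := inv_anti₀ ha hab
  have hb' : 0 ≤ b⁻¹ := inv_nonneg.2 (le_of_lt hb)
  have ha' : 0 ≤ a⁻¹ := inv_nonneg.2 (le_of_lt ha)
  have hPhi : Phi b⁻¹ ≤ Phi a⁻¹ := monotoneOn_Phi hb' ha' hinv
  dsimp only
  gcongr
  linarith [one_le_Phi hb']

lemma mul_mul_rpow_rpow_one_div {r : ℝ} (hr : 0 < r) (a b c : ℝ≥0∞) :
    (a * b * c ^ r) ^ (1 / r) = a ^ (1 / r) * b ^ (1 / r) * c := by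
  have hr' : 0 ≤ 1 / r := by positivity
  rw [ENNReal.mul_rpow_of_nonneg _ _ hr', ENNReal.mul_rpow_of_nonneg _ _ hr', one_div,
    ENNReal.rpow_rpow_inv hr.ne']

theorem stmt12 {N : ℕ} (r α : ℝ) (hr : 1 < r) (hα : 0 ≤ α) :
    ∃ C : ℝ, 0 < C ∧ ∀ f : (Fin N → ℝ) → ℝ, Measurable f →
      (⨆ (s : ℝ) (_ : 0 < s),
          (ENNReal.ofReal s * ENNReal.ofReal (Phi s⁻¹ ^ α) * rearrStar f s ^ r) ^ (1 / r)) ≤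
        ENNReal.ofReal C *
          ⨆ (s : ℝ) (_ : 0 < s),
            (ENNReal.ofReal s * ENNReal.ofReal (Phi s⁻¹ ^ α) * rearr f s ^ r) ^ (1 / r) := by
  have hr0 : 0 < r := by linarith
  have hp : 1 / r < 1 := (div_lt_one hr0).2 hr
  refine ⟨(1 - 1 / r)⁻¹, inv_pos.2 (sub_pos.2 hp), fun f _ => ?_⟩
  simp only [mul_mul_rpow_rpow_one_div hr0]
  exact iSup_rpow_mul_average_le hp (antitoneOn_ofReal_Phi_inv_rpow hα (by positivity))
end

section
/- Let N ≥ 1, θ ∈ (0, 2] with N > θ, and let h_t(x) := t^{−N/θ}(1 + t^{−1/θ}|x|)^{−N−θ} for x ∈ ℝ^N, t > 0. Let 1 ≤ r ≤ q < ∞ and γ ∈ ℝ with γ ≥ 0 if r = q. Then there exists C > 0 such that for all t > 0, ∫₀^∞ τ^{q(1 − 1/r)} (log(e + τ⁻¹))^γ (h_t*(τ))^q dτ ≤ C t^{−(Nq/θ)(1/r − 1/q)} (log(e + t⁻¹))^γ. -/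
open MeasureTheory ENNReal Set

/-- The kernel `h_t(x) = t^{-N/θ} (1 + t^{-1/θ}|x|)^{-N-θ}`. -/
noncomputable def hker (N : ℕ) (θ t : ℝ) (x : EuclideanSpace ℝ (Fin N)) : ℝ :=
  t ^ (-((N : ℝ) / θ)) * (1 + t ^ (-(1 / θ)) * ‖x‖) ^ (-((N : ℝ) + θ))

/-!
The superlevel sets of the radial kernel `h_t` are balls, so `h_t*(τ)` is at most the profile
`t^{-N/θ} (1 + (τ / (ω_N t^{N/θ}))^{1/N})^{-N-θ}`. The substitution `τ = ω_N t^{N/θ} σ` then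
factors out the power of `t` exactly, and the logarithmic weight is moved from `τ` to `t` by the
two-sided comparisons `Φ(xy) ≍ Φ(x)` (up to the factor `Φ(y) Φ(1/y)`) and `Φ(u^k) ≍ Φ(u)`, which
work for `γ` of either sign. What is left is a `σ`-integral with weight `σ^a`, `a = q (1 - 1/r)`;
it is finite because `Φ(σ) Φ(1/σ)` grows more slowly than any power of `σ` or `1/σ`, while
`a > -1` and the profile decays like `σ^{-(N+θ) q / N}` with `(N + θ) q / N > a + 1`.
-/

lemma one_le_Phi_s18 {s : ℝ} (hs : 0 ≤ s) : 1 ≤ Phi s := by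
  rw [Phi, Real.le_log_iff_exp_le (by positivity)]
  linarith

lemma Phi_pos_s18 {s : ℝ} (hs : 0 ≤ s) : 0 < Phi s :=
  one_pos.trans_le (one_le_Phi_s18 hs)

lemma Phi_le_Phi {s u : ℝ} (hs : 0 ≤ s) (hsu : s ≤ u) : Phi s ≤ Phi u :=
  Real.log_le_log (by positivity) (by linarith)

lemma Phi_one_le_two : Phi 1 ≤ 2 := by
  rw [Phi, Real.log_le_iff_le_exp (by positivity), show (2 : ℝ) = 1 + 1 by norm_num,
    Real.exp_add]
  nlinarith [Real.exp_one_gt_two]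

lemma measurable_Phi : Measurable Phi := by
  unfold Phi; fun_prop

lemma Phi_mul_le {x y : ℝ} (hx : 0 ≤ x) (hy : 0 ≤ y) : Phi (x * y) ≤ 2 * Phi x * Phi y := by
  have hsum : Phi (x * y) ≤ Phi x + Phi y := by
    rw [Phi, Phi, Phi, ← Real.log_mul (by positivity) (by positivity)]
    exact Real.log_le_log (by positivity) (by nlinarith [Real.exp_one_gt_two])
  nlinarith [one_le_Phi_s18 hx, one_le_Phi_s18 hy]

lemma Phi_mul_comparable {x y : ℝ} (hx : 0 ≤ x) (hy : 0 < y) :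
    Phi (x * y) ≤ 2 * Phi y⁻¹ * Phi y * Phi x ∧
      Phi x ≤ 2 * Phi y⁻¹ * Phi y * Phi (x * y) := by
  have hxy := Phi_mul_le hx hy.le
  have hyx := Phi_mul_le (mul_nonneg hx hy.le) (inv_nonneg.2 hy.le)
  rw [mul_inv_cancel_right₀ hy.ne'] at hyx
  have := one_le_Phi_s18 hy.le
  have := one_le_Phi_s18 (inv_nonneg.2 hy.le)
  have := Phi_pos_s18 hx
  have := Phi_pos_s18 (mul_nonneg hx hy.le)
  constructor <;> nlinarith

lemma Phi_rpow_le {k u : ℝ} (hk : 1 ≤ k) (hu : 0 ≤ u) : Phi (u ^ k) ≤ k * Phi u := by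
  have he : Real.exp 1 ≤ Real.exp 1 ^ k :=
    Real.self_le_rpow_of_one_le (by linarith [Real.exp_one_gt_two]) hk
  rw [Phi, Phi, ← Real.log_rpow (by positivity)]
  refine Real.log_le_log (by positivity) ?_
  linarith [Real.add_rpow_le_rpow_add (Real.exp_pos 1).le hu hk]

lemma Phi_le_two_mul_Phi_rpow {k u : ℝ} (hk : 1 ≤ k) (hu : 0 ≤ u) :
    Phi u ≤ 2 * Phi (u ^ k) := by
  have := one_le_Phi_s18 (Real.rpow_nonneg hu k)
  rcases le_or_gt u 1 with hu1 | hu1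
  · linarith [Phi_le_Phi hu hu1, Phi_one_le_two]
  · linarith [Phi_le_Phi hu (Real.self_le_rpow_of_one_le hu1.le hk)]

lemma Phi_rpow_comparable {k u : ℝ} (hk : 0 < k) (hu : 0 ≤ u) :
    Phi (u ^ k) ≤ 2 * max k k⁻¹ * Phi u ∧ Phi u ≤ 2 * max k k⁻¹ * Phi (u ^ k) := by
  have hv : 0 ≤ u ^ k := Real.rpow_nonneg hu k
  have := Phi_pos_s18 hu
  have := Phi_pos_s18 hv
  rcases le_total 1 k with hk1 | hk1
  · have := le_max_left k k⁻¹
    constructor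
    · nlinarith [Phi_rpow_le hk1 hu]
    · nlinarith [Phi_le_two_mul_Phi_rpow hk1 hu]
  · have hk1' : 1 ≤ k⁻¹ := (one_le_inv₀ hk).2 hk1
    have hvu : (u ^ k) ^ k⁻¹ = u := by
      rw [← Real.rpow_mul hu, mul_inv_cancel₀ hk.ne', Real.rpow_one]
    have h1 := Phi_rpow_le hk1' hv
    have h2 := Phi_le_two_mul_Phi_rpow hk1' hv
    rw [hvu] at h1 h2
    have := le_max_right k k⁻¹
    constructor
    · nlinarith
    · nlinarith

lemma rpow_le_rpow_abs_mul_rpow {a b c : ℝ} (ha : 0 < a) (hb : 0 < b) (hba : b ≤ c * a)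
    (hab : a ≤ c * b) (γ : ℝ) : b ^ γ ≤ c ^ |γ| * a ^ γ := by
  have hc : 0 < c := pos_of_mul_pos_left (hb.trans_le hba) ha.le
  rcases le_or_gt 0 γ with hγ | hγ
  · rw [abs_of_nonneg hγ, ← Real.mul_rpow hc.le ha.le]
    exact Real.rpow_le_rpow hb.le hba hγ
  · rw [abs_of_neg hγ, Real.rpow_neg hc.le, ← Real.inv_rpow hc.le,
      ← Real.mul_rpow (by positivity) ha.le]
    exact Real.rpow_le_rpow_of_nonpos (by positivity) ((inv_mul_le_iff₀ hc).2 hab) hγ.le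

lemma Phi_mul_rpow_le {x y : ℝ} (hx : 0 ≤ x) (hy : 0 < y) (γ : ℝ) :
    Phi (x * y) ^ γ ≤ (2 * Phi y⁻¹ * Phi y) ^ |γ| * Phi x ^ γ :=
  rpow_le_rpow_abs_mul_rpow (Phi_pos_s18 hx) (Phi_pos_s18 (by positivity)) (Phi_mul_comparable hx hy).1
    (Phi_mul_comparable hx hy).2 γ

lemma Phi_rpow_rpow_le {k u : ℝ} (hk : 0 < k) (hu : 0 ≤ u) (γ : ℝ) :
    Phi (u ^ k) ^ γ ≤ (2 * max k k⁻¹) ^ |γ| * Phi u ^ γ :=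
  rpow_le_rpow_abs_mul_rpow (Phi_pos_s18 hu) (Phi_pos_s18 (by positivity)) (Phi_rpow_comparable hk hu).1
    (Phi_rpow_comparable hk hu).2 γ

lemma Phi_le_mul_rpow {δ u : ℝ} (hδ : 0 < δ) (hu : 1 ≤ u) : Phi u ≤ (2 + δ⁻¹) * u ^ δ := by
  have he := Real.exp_one_gt_two
  have hlog : Phi u ≤ 2 + Real.log u :=
    calc Phi u ≤ Real.log (Real.exp 2 * u) := by
          refine Real.log_le_log (by positivity) ?_
          rw [show (2 : ℝ) = 1 + 1 by norm_num, Real.exp_add]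
          nlinarith [mul_le_mul_of_nonneg_right he.le (by positivity : 0 ≤ Real.exp 1 * u)]
      _ = 2 + Real.log u := by rw [Real.log_mul (by positivity) (by positivity), Real.log_exp]
  have h1 : 1 ≤ u ^ δ := Real.one_le_rpow hu hδ.le
  have h2 : Real.log u ≤ u ^ δ * δ⁻¹ :=
    div_eq_mul_inv (u ^ δ) δ ▸ Real.log_le_rpow_div (by linarith) hδ
  nlinarith [inv_pos.2 hδ]

lemma exists_Phi_mul_Phi_inv_rpow_le {b ε : ℝ} (hb : 0 ≤ b) (hε : 0 < ε) :
    ∃ C, 0 ≤ C ∧ ∀ σ : ℝ, 1 ≤ σ → (Phi σ * Phi σ⁻¹) ^ b ≤ C * σ ^ ε := by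
  set δ := ε / (b + 1)
  have hδ : 0 < δ := by positivity
  have hδb : δ * b ≤ ε := by
    rw [div_mul_eq_mul_div, div_le_iff₀ (by positivity)]; nlinarith
  have hC : 0 < Phi 1 * (2 + δ⁻¹) := mul_pos (Phi_pos_s18 zero_le_one) (by positivity)
  refine ⟨(Phi 1 * (2 + δ⁻¹)) ^ b, by positivity, fun σ hσ => ?_⟩
  have hσ0 : 0 < σ := one_pos.trans_le hσ
  have hinv : Phi σ⁻¹ ≤ Phi 1 := Phi_le_Phi (by positivity) (inv_le_one_of_one_le₀ hσ)
  calc (Phi σ * Phi σ⁻¹) ^ b ≤ (Phi 1 * (2 + δ⁻¹) * σ ^ δ) ^ b := by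
        refine Real.rpow_le_rpow (mul_pos (Phi_pos_s18 hσ0.le) (Phi_pos_s18 (by positivity))).le ?_ hb
        nlinarith [Phi_le_mul_rpow hδ hσ, Phi_pos_s18 hσ0.le, Phi_pos_s18 (inv_nonneg.2 hσ0.le),
          Real.rpow_pos_of_pos hσ0 δ]
    _ = (Phi 1 * (2 + δ⁻¹)) ^ b * σ ^ (δ * b) := by
        rw [Real.mul_rpow hC.le (by positivity), ← Real.rpow_mul hσ0.le]
    _ ≤ (Phi 1 * (2 + δ⁻¹)) ^ b * σ ^ ε := by
        gcongr

lemma setLIntegral_Ioi_zero_eq_comp_mul_left (f : ℝ → ℝ≥0∞) {c : ℝ} (hc : 0 < c) :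
    ∫⁻ τ in Ioi (0 : ℝ), f τ = ∫⁻ σ in Ioi (0 : ℝ), ENNReal.ofReal c * f (c * σ) := by
  conv_lhs => rw [← image_const_mul_Ioi_zero hc]
  rw [lintegral_image_eq_lintegral_abs_deriv_mul measurableSet_Ioi
    (fun σ _ => (hasDerivAt_const_mul c).hasDerivWithinAt) (mul_right_injective₀ hc.ne').injOn,
    abs_of_pos hc]

lemma integrableOn_Ioc_zero_one_of_le_rpow {f : ℝ → ℝ} {C s : ℝ} (hf : AEStronglyMeasurable f)
    (hs : -1 < s) (h : ∀ σ ∈ Ioc (0 : ℝ) 1, ‖f σ‖ ≤ C * σ ^ s) : IntegrableOn f (Ioc 0 1) :=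
  ((intervalIntegral.intervalIntegrable_rpow' hs).1.const_mul C).mono' hf.restrict
    (ae_restrict_of_forall_mem measurableSet_Ioc h)

lemma integrableOn_Ioi_one_of_le_rpow {f : ℝ → ℝ} {C s : ℝ} (hf : AEStronglyMeasurable f)
    (hs : s < -1) (h : ∀ σ ∈ Ioi (1 : ℝ), ‖f σ‖ ≤ C * σ ^ s) : IntegrableOn f (Ioi 1) :=
  ((integrableOn_Ioi_rpow_of_lt hs one_pos).const_mul C).mono' hf.restrict
    (ae_restrict_of_forall_mem measurableSet_Ioi h)

lemma integrableOn_rpow_mul_Phi_mul_one_add_rpow {a b ν m : ℝ} (ha : -1 < a) (hb : 0 ≤ b)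
    (hν : 0 < ν) (hm : a + 1 < ν * m) :
    IntegrableOn (fun σ : ℝ => σ ^ a * (Phi σ * Phi σ⁻¹) ^ b * (1 + σ ^ ν) ^ (-m)) (Ioi 0) := by
  obtain ⟨ε, hε, hε'⟩ := exists_between (lt_min (by linarith : 0 < a + 1)
    (by linarith : 0 < ν * m - (a + 1)))
  obtain ⟨hε₁, hε₂⟩ := lt_min_iff.1 hε'
  have hm0 : 0 ≤ m := (pos_of_mul_pos_right (by linarith : 0 < ν * m) hν.le).le
  obtain ⟨C, hC0, hC⟩ := exists_Phi_mul_Phi_inv_rpow_le hb hε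
  have hmeas : AEStronglyMeasurable
      (fun σ : ℝ => σ ^ a * (Phi σ * Phi σ⁻¹) ^ b * (1 + σ ^ ν) ^ (-m)) := by
    have := measurable_Phi
    exact Measurable.aestronglyMeasurable (by fun_prop)
  have hnorm : ∀ σ : ℝ, 0 < σ → ‖σ ^ a * (Phi σ * Phi σ⁻¹) ^ b * (1 + σ ^ ν) ^ (-m)‖
      = σ ^ a * (Phi σ * Phi σ⁻¹) ^ b * (1 + σ ^ ν) ^ (-m) := fun σ hσ =>
    Real.norm_of_nonneg (by have := Phi_pos_s18 hσ.le; have := Phi_pos_s18 (inv_nonneg.2 hσ.le); positivity)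
  rw [← Ioc_union_Ioi_eq_Ioi zero_le_one]
  refine IntegrableOn.union ?_ ?_
  · refine integrableOn_Ioc_zero_one_of_le_rpow (C := C) hmeas (by linarith : -1 < a - ε)
      fun σ ⟨hσ0, hσ1⟩ => ?_
    have hW := hC σ⁻¹ ((one_le_inv₀ hσ0).2 hσ1)
    rw [inv_inv, mul_comm (Phi σ⁻¹), Real.inv_rpow hσ0.le, ← Real.rpow_neg hσ0.le] at hW
    have hP : (1 + σ ^ ν) ^ (-m) ≤ 1 :=
      Real.rpow_le_one_of_one_le_of_nonpos (by linarith [Real.rpow_nonneg hσ0.le ν]) (by linarith)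
    have := Phi_pos_s18 hσ0.le
    have := Phi_pos_s18 (inv_nonneg.2 hσ0.le)
    rw [hnorm σ hσ0, sub_eq_add_neg, Real.rpow_add hσ0]
    calc σ ^ a * (Phi σ * Phi σ⁻¹) ^ b * (1 + σ ^ ν) ^ (-m)
        ≤ σ ^ a * (C * σ ^ (-ε)) * 1 := by gcongr
      _ = C * (σ ^ a * σ ^ (-ε)) := by ring
  · refine integrableOn_Ioi_one_of_le_rpow (C := C) hmeas (by linarith : a + ε + -(ν * m) < -1)
      fun σ (hσ : 1 < σ) => ?_
    have hσ0 : 0 < σ := one_pos.trans hσ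
    have hP : (1 + σ ^ ν) ^ (-m) ≤ σ ^ (-(ν * m)) := by
      rw [← mul_neg, Real.rpow_mul hσ0.le]
      exact Real.rpow_le_rpow_of_nonpos (by positivity) (by linarith) (by linarith)
    have := Phi_pos_s18 hσ0.le
    have := Phi_pos_s18 (inv_nonneg.2 hσ0.le)
    rw [hnorm σ hσ0, Real.rpow_add hσ0, Real.rpow_add hσ0]
    calc σ ^ a * (Phi σ * Phi σ⁻¹) ^ b * (1 + σ ^ ν) ^ (-m)
        ≤ σ ^ a * (C * σ ^ ε) * σ ^ (-(ν * m)) := by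
          gcongr
          exact hC σ hσ.le
      _ = C * (σ ^ a * σ ^ ε * σ ^ (-(ν * m))) := by ring

lemma exists_lintegral_rpow_mul_Phi_inv_mul_one_add_rpow_le {a ν m : ℝ} (ha : -1 < a) (hν : 0 < ν)
    (hm : a + 1 < ν * m) (γ : ℝ) :
    ∃ C, 0 < C ∧ ∀ c : ℝ, 0 < c →
      ∫⁻ τ in Ioi (0 : ℝ), ENNReal.ofReal (τ ^ a * Phi τ⁻¹ ^ γ * (1 + (τ / c) ^ ν) ^ (-m))
        ≤ ENNReal.ofReal (C * c ^ (1 + a) * Phi c⁻¹ ^ γ) := by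
  set g : ℝ → ℝ := fun σ => σ ^ a * (Phi σ * Phi σ⁻¹) ^ |γ| * (1 + σ ^ ν) ^ (-m)
  have hg0 : ∀ σ ∈ Ioi (0 : ℝ), 0 ≤ g σ := fun σ (hσ : 0 < σ) => by
    have := Phi_pos_s18 hσ.le
    have := Phi_pos_s18 (inv_nonneg.2 hσ.le)
    positivity
  set I := ∫ σ in Ioi (0 : ℝ), g σ
  have hI : 0 ≤ I := setIntegral_nonneg measurableSet_Ioi hg0
  refine ⟨2 ^ |γ| * I + 1, by positivity, fun c hc => ?_⟩
  set D := c ^ (1 + a) * Phi c⁻¹ ^ γ * 2 ^ |γ|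
  have hD : 0 ≤ D := by have := Phi_pos_s18 (inv_nonneg.2 hc.le); positivity
  have hpoint : ∀ σ ∈ Ioi (0 : ℝ), ENNReal.ofReal c * ENNReal.ofReal
      ((c * σ) ^ a * Phi (c * σ)⁻¹ ^ γ * (1 + (c * σ / c) ^ ν) ^ (-m))
        ≤ ENNReal.ofReal D * ENNReal.ofReal (g σ) := fun σ (hσ : 0 < σ) => by
    rw [← ENNReal.ofReal_mul hc.le, ← ENNReal.ofReal_mul hD]
    refine ENNReal.ofReal_le_ofReal ?_
    have := Phi_pos_s18 hσ.le
    have := Phi_pos_s18 (inv_nonneg.2 hσ.le)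
    calc c * ((c * σ) ^ a * Phi (c * σ)⁻¹ ^ γ * (1 + (c * σ / c) ^ ν) ^ (-m))
        = c ^ (1 + a) * σ ^ a * (1 + σ ^ ν) ^ (-m) * Phi (c⁻¹ * σ⁻¹) ^ γ := by
          rw [mul_div_cancel_left₀ σ hc.ne', mul_inv,
            Real.mul_rpow hc.le hσ.le, Real.rpow_add hc, Real.rpow_one]
          ring
      _ ≤ c ^ (1 + a) * σ ^ a * (1 + σ ^ ν) ^ (-m)
          * ((2 * Phi σ⁻¹⁻¹ * Phi σ⁻¹) ^ |γ| * Phi c⁻¹ ^ γ) := by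
          gcongr
          exact Phi_mul_rpow_le (inv_nonneg.2 hc.le) (inv_pos.2 hσ) γ
      _ = D * g σ := by
          rw [inv_inv, mul_assoc 2, Real.mul_rpow zero_le_two (by positivity)]
          ring
  rw [setLIntegral_Ioi_zero_eq_comp_mul_left _ hc]
  calc _ ≤ ∫⁻ σ in Ioi (0 : ℝ), ENNReal.ofReal D * ENNReal.ofReal (g σ) :=
        setLIntegral_mono' measurableSet_Ioi hpoint
    _ = ENNReal.ofReal (D * I) := by
        rw [lintegral_const_mul' _ _ ofReal_ne_top, ENNReal.ofReal_mul hD,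
          ofReal_integral_eq_lintegral_ofReal
            (integrableOn_rpow_mul_Phi_mul_one_add_rpow ha (abs_nonneg γ) hν hm)
            ((ae_restrict_iff' measurableSet_Ioi).2 (ae_of_all _ hg0))]
    _ ≤ _ := by
        refine ENNReal.ofReal_le_ofReal ?_
        have : 0 ≤ c ^ (1 + a) * Phi c⁻¹ ^ γ := by have := Phi_pos_s18 (inv_nonneg.2 hc.le); positivity
        linarith

noncomputable def unitBallVolume (N : ℕ) : ℝ :=
  (volume (Metric.ball (0 : EuclideanSpace ℝ (Fin N)) 1)).toReal

lemma unitBallVolume_pos (N : ℕ) : 0 < unitBallVolume N :=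
  ENNReal.toReal_pos (Metric.measure_ball_pos volume 0 one_pos).ne' measure_ball_lt_top.ne

lemma volume_ball_eq_pow_mul_unitBallVolume (N : ℕ) {ρ : ℝ} (hρ : 0 < ρ) :
    volume (Metric.ball (0 : EuclideanSpace ℝ (Fin N)) ρ) =
      ENNReal.ofReal (ρ ^ N * unitBallVolume N) := by
  rw [Measure.addHaar_ball_of_pos _ _ hρ, finrank_euclideanSpace_fin, unitBallVolume,
    ENNReal.ofReal_mul (by positivity), ENNReal.ofReal_toReal measure_ball_lt_top.ne]

lemma rearr_le_ofReal {E : Type*} [MeasureSpace E] {f : E → ℝ} {s v : ℝ}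
    (h : volume {x | ENNReal.ofReal v < (‖f x‖₊ : ℝ≥0∞)} ≤ ENNReal.ofReal s) :
    rearr f s ≤ ENNReal.ofReal v :=
  sInf_le h

lemma rearr_hker_le {N : ℕ} {θ t ρ : ℝ} (hNθ : 0 < N + θ) (ht : 0 < t) (hρ : 0 < ρ) :
    rearr (hker N θ t) (ρ ^ N * unitBallVolume N) ≤
      ENNReal.ofReal (t ^ (-((N : ℝ) / θ)) * (1 + t ^ (-(1 / θ)) * ρ) ^ (-((N : ℝ) + θ))) := by
  refine rearr_le_ofReal (le_of_eq ?_)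
  rw [← volume_ball_eq_pow_mul_unitBallVolume N hρ]
  congr 1
  ext x
  have hs : 0 < t ^ (-(1 / θ)) := Real.rpow_pos_of_pos ht _
  simp only [mem_ofPred_eq, Metric.mem_ball, dist_zero_right, hker]
  rw [← enorm_eq_nnnorm, Real.enorm_eq_ofReal (by positivity),
    ENNReal.ofReal_lt_ofReal_iff (by positivity), mul_lt_mul_iff_right₀ (by positivity),
    Real.rpow_lt_rpow_iff_of_neg (by positivity) (by positivity) (by linarith),
    add_lt_add_iff_left, mul_lt_mul_iff_right₀ hs]

lemma rearr_hker_rpow_le {N : ℕ} {θ t τ q : ℝ} (hN : N ≠ 0) (hθ : 0 < θ) (ht : 0 < t)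
    (hτ : 0 < τ) (hq : 0 ≤ q) :
    rearr (hker N θ t) τ ^ q ≤ ENNReal.ofReal (t ^ (-((N : ℝ) / θ) * q) *
      (1 + (τ / (unitBallVolume N * t ^ ((N : ℝ) / θ))) ^ (N : ℝ)⁻¹) ^ (-(((N : ℝ) + θ) * q))) := by
  have hN' : (N : ℝ) ≠ 0 := Nat.cast_ne_zero.2 hN
  have hω := unitBallVolume_pos N
  set ρ := (τ / unitBallVolume N) ^ (N : ℝ)⁻¹
  have hρ : 0 < ρ := by positivity
  have hτρ : ρ ^ N * unitBallVolume N = τ := by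
    rw [← Real.rpow_natCast, ← Real.rpow_mul (by positivity), inv_mul_cancel₀ hN', Real.rpow_one,
      div_mul_cancel₀ τ hω.ne']
  have hscale : t ^ (-(1 / θ)) * ρ = (τ / (unitBallVolume N * t ^ ((N : ℝ) / θ))) ^ (N : ℝ)⁻¹ := by
    rw [← div_div, Real.div_rpow (by positivity) (by positivity), ← Real.rpow_mul ht.le,
      div_mul_eq_mul_div, mul_inv_cancel₀ hN', Real.rpow_neg ht.le]
    ring
  have hle := rearr_hker_le (N := N) (by positivity) ht hρ
  rw [hτρ, hscale] at hle
  calc rearr (hker N θ t) τ ^ q ≤ _ := ENNReal.rpow_le_rpow hle hq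
    _ = _ := by
      rw [ENNReal.ofReal_rpow_of_nonneg (by positivity) hq,
        Real.mul_rpow (by positivity) (by positivity),
        ← Real.rpow_mul ht.le, ← Real.rpow_mul (by positivity)]
      simp only [neg_mul]

lemma exists_Phi_inv_mul_rpow_le {ω k : ℝ} (hω : 0 < ω) (hk : 0 < k) (γ : ℝ) :
    ∃ K, 0 < K ∧ ∀ t : ℝ, 0 < t → Phi (ω * t ^ k)⁻¹ ^ γ ≤ K * Phi t⁻¹ ^ γ := by
  have := Phi_pos_s18 hω.le
  have := Phi_pos_s18 (inv_nonneg.2 hω.le)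
  refine ⟨(2 * Phi ω * Phi ω⁻¹) ^ |γ| * (2 * max k k⁻¹) ^ |γ|,
    mul_pos (by positivity) (Real.rpow_pos_of_pos (by positivity) _), fun t ht => ?_⟩
  rw [mul_inv, mul_comm, ← Real.inv_rpow ht.le]
  calc Phi (t⁻¹ ^ k * ω⁻¹) ^ γ ≤ (2 * Phi ω⁻¹⁻¹ * Phi ω⁻¹) ^ |γ| * Phi (t⁻¹ ^ k) ^ γ :=
        Phi_mul_rpow_le (by positivity) (inv_pos.2 hω) γ
    _ ≤ (2 * Phi ω * Phi ω⁻¹) ^ |γ| * ((2 * max k k⁻¹) ^ |γ| * Phi t⁻¹ ^ γ) := by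
        rw [inv_inv]
        gcongr
        exact Phi_rpow_rpow_le hk (inv_nonneg.2 ht.le) γ
    _ = _ := by ring

lemma lintegral_rpow_mul_Phi_inv_mul_rearr_hker_le_mul_lintegral {N : ℕ} {θ t a q : ℝ}
    (hN : N ≠ 0) (hθ : 0 < θ) (ht : 0 < t) (hq : 0 ≤ q) (γ : ℝ) :
    ∫⁻ τ in Ioi (0 : ℝ), ENNReal.ofReal (τ ^ a * Phi τ⁻¹ ^ γ) * rearr (hker N θ t) τ ^ q ≤
      ENNReal.ofReal (t ^ (-((N : ℝ) / θ) * q)) * ∫⁻ τ in Ioi (0 : ℝ), ENNReal.ofReal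
        (τ ^ a * Phi τ⁻¹ ^ γ * (1 + (τ / (unitBallVolume N * t ^ ((N : ℝ) / θ))) ^ (N : ℝ)⁻¹)
          ^ (-(((N : ℝ) + θ) * q))) := by
  rw [← lintegral_const_mul' _ _ ofReal_ne_top]
  refine setLIntegral_mono' measurableSet_Ioi fun τ (hτ : 0 < τ) => ?_
  have := Phi_pos_s18 (inv_nonneg.2 hτ.le)
  grw [rearr_hker_rpow_le hN hθ ht hτ hq, ← ENNReal.ofReal_mul (by positivity),
    ← ENNReal.ofReal_mul (by positivity)]
  exact (congrArg ENNReal.ofReal (by ring)).le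

lemma exists_lintegral_rpow_mul_Phi_inv_mul_rearr_hker_le {N : ℕ} {θ a q : ℝ} (hN : N ≠ 0)
    (hθ : 0 < θ) (hq : 0 ≤ q) (ha : -1 < a) (hm : a + 1 < (N : ℝ)⁻¹ * ((N + θ) * q)) (γ : ℝ) :
    ∃ C, 0 < C ∧ ∀ t : ℝ, 0 < t →
      ∫⁻ τ in Ioi (0 : ℝ), ENNReal.ofReal (τ ^ a * Phi τ⁻¹ ^ γ) * rearr (hker N θ t) τ ^ q ≤
        ENNReal.ofReal (C * t ^ ((N : ℝ) / θ * (1 + a - q)) * Phi t⁻¹ ^ γ) := by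
  have hN0 : (0 : ℝ) < N := Nat.cast_pos.2 (Nat.pos_of_ne_zero hN)
  set ω := unitBallVolume N
  have hω : 0 < ω := unitBallVolume_pos N
  set k := (N : ℝ) / θ
  obtain ⟨C, hC, hint⟩ :=
    exists_lintegral_rpow_mul_Phi_inv_mul_one_add_rpow_le ha (inv_pos.2 hN0) hm γ
  obtain ⟨K, hK, hPhi⟩ := exists_Phi_inv_mul_rpow_le hω (div_pos hN0 hθ) γ
  refine ⟨C * ω ^ (1 + a) * K, by positivity, fun t ht => ?_⟩
  have hc : 0 < ω * t ^ k := by positivity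
  have := Phi_pos_s18 (inv_nonneg.2 hc.le)
  grw [lintegral_rpow_mul_Phi_inv_mul_rearr_hker_le_mul_lintegral hN hθ ht hq γ, hint _ hc,
    ← ENNReal.ofReal_mul (by positivity)]
  refine ENNReal.ofReal_le_ofReal ?_
  calc t ^ (-k * q) * (C * (ω * t ^ k) ^ (1 + a) * Phi (ω * t ^ k)⁻¹ ^ γ)
      = C * ω ^ (1 + a) * t ^ (k * (1 + a - q)) * Phi (ω * t ^ k)⁻¹ ^ γ := by
        rw [Real.mul_rpow hω.le (by positivity), ← Real.rpow_mul ht.le,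
          show k * (1 + a - q) = -k * q + k * (1 + a) by ring, Real.rpow_add ht]
        ring
    _ ≤ C * ω ^ (1 + a) * t ^ (k * (1 + a - q)) * (K * Phi t⁻¹ ^ γ) := by grw [hPhi t ht]
    _ = C * ω ^ (1 + a) * K * t ^ (k * (1 + a - q)) * Phi t⁻¹ ^ γ := by ring

theorem stmt18_general (N : ℕ) (hN : 1 ≤ N) (θ : ℝ) (hθ0 : 0 < θ)
    (r q γ : ℝ) (hr : 1 ≤ r) (hrq : r ≤ q) :
    ∃ C : ℝ, 0 < C ∧ ∀ t : ℝ, 0 < t →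
      (∫⁻ τ in Set.Ioi (0 : ℝ),
          ENNReal.ofReal (τ ^ (q * (1 - 1 / r)) * Phi τ⁻¹ ^ γ) * rearr (hker N θ t) τ ^ q) ≤
        ENNReal.ofReal
          (C * t ^ (-((N : ℝ) * q / θ) * (1 / r - 1 / q)) * Phi t⁻¹ ^ γ) := by
  have hN0 : (0 : ℝ) < N := by exact_mod_cast hN
  have hq : 0 < q := by linarith
  have ha : -1 < q * (1 - 1 / r) := by
    have : 1 / r ≤ 1 := (div_le_one (by linarith)).2 hr
    nlinarith
  have hm : q * (1 - 1 / r) + 1 < (N : ℝ)⁻¹ * ((N + θ) * q) := by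
    have : 1 ≤ q / r := (one_le_div (by linarith)).2 hrq
    have : 0 < θ * q / N := by positivity
    rw [mul_sub, mul_one, mul_one_div,
      show (N : ℝ)⁻¹ * ((N + θ) * q) = q + θ * q / N by field_simp]
    linarith
  obtain ⟨C, hC, hbound⟩ :=
    exists_lintegral_rpow_mul_Phi_inv_mul_rearr_hker_le (by omega) hθ0 hq.le ha hm γ
  refine ⟨C, hC, fun t ht => ?_⟩
  convert hbound t ht using 5
  field_simp
  ring

theorem stmt18 (N : ℕ) (hN : 1 ≤ N) (θ : ℝ) (hθ0 : 0 < θ) (hθ2 : θ ≤ 2) (hθN : θ < N)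
    (r q γ : ℝ) (hr : 1 ≤ r) (hrq : r ≤ q) (hγ : r = q → 0 ≤ γ) :
    ∃ C : ℝ, 0 < C ∧ ∀ t : ℝ, 0 < t →
      (∫⁻ τ in Set.Ioi (0 : ℝ),
          ENNReal.ofReal (τ ^ (q * (1 - 1 / r)) * Phi τ⁻¹ ^ γ) * rearr (hker N θ t) τ ^ q) ≤
        ENNReal.ofReal
          (C * t ^ (-((N : ℝ) * q / θ) * (1 / r - 1 / q)) * Phi t⁻¹ ^ γ) :=
  stmt18_general N hN θ hθ0 r q γ hr hrq
end
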